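/- Let K be a finite simplicial complex with an acyclic partial matching μ : M → M. For any α ∈ R_q(μ) there exists a set S(α) ⊆ R_{q-1}(μ) such that ∂(φ_q(α)) = Σ_{β ∈ S(α)} φ_{q-1}(β). -/
import Mathlib


set_option maxSynthPendingDepth 2

/-! Simplicial ℤ/2 chains and homology machinery. -/

/-- Chains with `ℤ/2` coefficients, formal sums of finite subsets of `V`. -/
abbrev Ch (V : Type*) := Finset V →₀ ZMod 2

/-- The simplicial boundary operator: a simplex with at least two vertices is sent
to the sum of its codimension-1 faces; vertices are sent to `0`. -/
noncomputable def bdry (V : Type*) [DecidableEq V] : Ch V →ₗ[ZMod 2] Ch V :=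
  Finsupp.linearCombination (ZMod 2) fun σ : Finset V =>
    if σ.card ≤ 1 then 0 else ∑ v ∈ σ, Finsupp.single (σ.erase v) (1 : ZMod 2)

/-- A simplicial complex: a collection of nonempty finite subsets of `V`
closed under taking nonempty subsets. -/
def IsComplex {V : Type*} (K : Set (Finset V)) : Prop :=
  ∀ σ ∈ K, σ.Nonempty ∧ ∀ τ ⊆ σ, τ.Nonempty → τ ∈ K

/-- The space of chains supported on simplices of `K` with `k` vertices
(i.e. the simplicial chain group of degree `k - 1`). -/
noncomputable def chainCard {V : Type*} [DecidableEq V] (K : Set (Finset V)) (k : ℕ) :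
    Submodule (ZMod 2) (Ch V) :=
  Submodule.span (ZMod 2) {f | ∃ σ ∈ K, σ.card = k ∧ f = Finsupp.single σ 1}

theorem chainCard_mono {V : Type*} [DecidableEq V] {K₁ K₂ : Set (Finset V)}
    (h : K₁ ⊆ K₂) (k : ℕ) : chainCard K₁ k ≤ chainCard K₂ k := by
  apply Submodule.span_mono
  rintro f ⟨σ, hσ, hc, rfl⟩
  exact ⟨σ, h hσ, hc, rfl⟩

/-- Cycles (in cardinality grading `k`, i.e. degree `k-1`) of a chain subcomplex `W`. -/
noncomputable def cyclesOf {V : Type*} [DecidableEq V] (W : ℕ → Submodule (ZMod 2) (Ch V)) (k : ℕ) :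
    Submodule (ZMod 2) (Ch V) :=
  W k ⊓ LinearMap.ker (bdry V)

/-- Boundaries (in cardinality grading `k`, i.e. degree `k-1`) of a chain subcomplex `W`. -/
noncomputable def bdriesOf {V : Type*} [DecidableEq V] (W : ℕ → Submodule (ZMod 2) (Ch V)) (k : ℕ) :
    Submodule (ZMod 2) (Ch V) :=
  Submodule.map (bdry V) (W (k + 1))

/-- Homology of the chain complex `W` in cardinality grading `k` (degree `k - 1`):
cycles modulo boundaries. -/
abbrev homolOf {V : Type*} [DecidableEq V] (W : ℕ → Submodule (ZMod 2) (Ch V)) (k : ℕ) :=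
  ↥(cyclesOf W k) ⧸ (bdriesOf W k).comap (cyclesOf W k).subtype

/-- The map on homology induced by a degreewise inclusion of chain complexes. -/
noncomputable def homolMap {V : Type*} [DecidableEq V]
    (W W' : ℕ → Submodule (ZMod 2) (Ch V)) (h : ∀ k, W k ≤ W' k) (k : ℕ) :
    homolOf W k →ₗ[ZMod 2] homolOf W' k :=
  Submodule.mapQ _ _ (Submodule.inclusion (inf_le_inf (h k) le_rfl))
    (by
      intro x hx
      simp only [Submodule.mem_comap, Submodule.subtype_apply, Submodule.coe_inclusion]
        at hx ⊢
      exact Submodule.map_mono (h (k + 1)) hx)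

/-! Discrete Morse theory: partial matchings, acyclicity, the closure map. -/

/-- `Covers σ τ`: `σ` covers `τ` in the face poset, i.e. `τ ⊆ σ` in codimension one. -/
def Covers {V : Type*} (σ τ : Finset V) : Prop :=
  τ ⊆ σ ∧ σ.card = τ.card + 1

/-- A partial matching: an involution `μ` on a set `M` of simplices matching each
simplex with a simplex that covers it or that it covers. -/
structure PartialMatching (V : Type*) where
  M : Set (Finset V)
  μ : Finset V → Finset V
  mem_M : ∀ σ ∈ M, μ σ ∈ M
  invol : ∀ σ ∈ M, μ (μ σ) = σ
  matched : ∀ σ ∈ M, Covers (μ σ) σ ∨ Covers σ (μ σ)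

/-- Acyclicity of a partial matching: there is no cyclic sequence
`σ₁ ≻ μ(σ₁) ≺ σ₂ ≻ μ(σ₂) ≺ ⋯ ≺ σ_l ≻ μ(σ_l) ≺ σ₁` with `l ≥ 2` and the `σᵢ` distinct. -/
def PartialMatching.Acyclic {V : Type*} (m : PartialMatching V) : Prop :=
  ¬ ∃ (l : ℕ) (f : ℕ → Finset V), 2 ≤ l ∧
      (∀ i < l, ∀ j < l, f i = f j → i = j) ∧
      (∀ i < l, f i ∈ m.M ∧ Covers (f i) (m.μ (f i))) ∧
      (∀ i < l, Covers (f ((i + 1) % l)) (m.μ (f i)))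

/-- `M^↑`: matched simplices lying above their partner. -/
def Mup {V : Type*} (m : PartialMatching V) : Set (Finset V) :=
  {σ | σ ∈ m.M ∧ Covers σ (m.μ σ)}

/-- `M_q^↑` in cardinality grading: elements of `M^↑` with `k` vertices (degree `k-1`). -/
def MupCard {V : Type*} (m : PartialMatching V) (k : ℕ) : Set (Finset V) :=
  {σ | σ ∈ Mup m ∧ σ.card = k}

/-- `R_q(μ)` in cardinality grading: the unmatched (critical) simplices of `K`
with `k` vertices (degree `k-1`). -/
def Rcard {V : Type*} (K : Set (Finset V)) (m : PartialMatching V) (k : ℕ) :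
    Set (Finset V) :=
  {σ | σ ∈ K ∧ σ.card = k ∧ σ ∉ m.M}

/-- `(α, β)` is an edge of the graph `G(μ)`: `μ β` is defined, `β` lies above its
partner, and `α` covers `μ β` (with `β ≠ α`). -/
def IsEdge {V : Type*} (m : PartialMatching V) (α β : Finset V) : Prop :=
  β ≠ α ∧ β ∈ m.M ∧ Covers β (m.μ β) ∧ Covers α (m.μ β)

open scoped Classical in
/-- `φ` is the closure map of the matching `m` on `K`: it satisfies the defining
recursion `φ α = α + ∑ φ β` over the edges `(α, β)` emanating from `α` in `G(μ)`. -/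
def IsClosure {V : Type*} [Fintype V] [DecidableEq V] (K : Set (Finset V))
    (m : PartialMatching V) (φ : Finset V → Ch V) : Prop :=
  ∀ α ∈ K, φ α = Finsupp.single α 1 + ∑ β : Finset V, if IsEdge m α β then φ β else 0

/-- The degree-`(k-1)` chain group of the Morse (critical) complex of `C`:
the span of the closures of the unmatched simplices of `C` with `k` vertices. -/
noncomputable def critWOn {V : Type*} [DecidableEq V] (C : Set (Finset V))
    (m : PartialMatching V) (φ : Finset V → Ch V) (k : ℕ) :
    Submodule (ZMod 2) (Ch V) :=
  Submodule.span (ZMod 2) {f | ∃ γ, γ ∈ C ∧ γ.card = k ∧ γ ∉ m.M ∧ f = φ γ}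

theorem critWOn_mono {V : Type*} [DecidableEq V] {C₁ C₂ : Set (Finset V)}
    (h : C₁ ⊆ C₂) (m : PartialMatching V) (φ : Finset V → Ch V) (k : ℕ) :
    critWOn C₁ m φ k ≤ critWOn C₂ m φ k := by
  apply Submodule.span_mono
  rintro f ⟨γ, hγ, hc, hm, rfl⟩
  exact ⟨γ, h hγ, hc, hm, rfl⟩

/-- The degree-`(k-1)` chain group of the complex `Match`, spanned by `M_{k-1}^↑`
together with the boundaries of the elements of `M_k^↑`. -/
noncomputable def matchW {V : Type*} [DecidableEq V] (m : PartialMatching V) (k : ℕ) :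
    Submodule (ZMod 2) (Ch V) :=
  Submodule.span (ZMod 2)
    ({f | ∃ σ ∈ MupCard m k, f = Finsupp.single σ 1} ∪
      {f | ∃ β ∈ MupCard m (k + 1), f = bdry V (Finsupp.single β 1)})

/-- The set `B_q^R ∪ B_q^↑ ∪ B_q^↓` (in cardinality grading `k = q + 1`). -/
noncomputable def morseBasis {V : Type*} [DecidableEq V] (K : Set (Finset V))
    (m : PartialMatching V) (φ : Finset V → Ch V) (k : ℕ) : Set (Ch V) :=
  {f | ∃ γ ∈ Rcard K m k, f = φ γ} ∪
    ({f | ∃ σ ∈ MupCard m k, f = Finsupp.single σ 1} ∪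
      {f | ∃ β ∈ MupCard m (k + 1), f = bdry V (Finsupp.single β 1)})


set_option linter.unusedSectionVars false

section Aux
variable {V : Type*} [DecidableEq V]

lemma ch_add_self (x : Ch V) : x + x = 0 := by
  rw [← two_smul (ZMod 2) x]
  have : (2 : ZMod 2) = 0 := by decide
  rw [this, zero_smul]

lemma bdry_single (σ : Finset V) :
    bdry V (Finsupp.single σ 1) =
      if σ.card ≤ 1 then 0 else ∑ v ∈ σ, Finsupp.single (σ.erase v) (1 : ZMod 2) := by
  rw [bdry, Finsupp.linearCombination_single, one_smul]

lemma bdry_single_apply {σ τ : Finset V} (hτ : τ.Nonempty) (hc : τ.card + 1 = σ.card) :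
    (bdry V (Finsupp.single σ 1)) τ = if τ ⊆ σ then 1 else 0 := by
  have hτc : 1 ≤ τ.card := Finset.card_pos.mpr hτ
  have hσc : ¬ σ.card ≤ 1 := by omega
  rw [bdry_single, if_neg hσc, Finsupp.finset_sum_apply]
  by_cases hsub : τ ⊆ σ
  · rw [if_pos hsub]
    have h1 : (σ \ τ).card = 1 := by
      rw [Finset.card_sdiff_of_subset hsub]; omega
    obtain ⟨v₀, hv₀⟩ := Finset.card_eq_one.mp h1
    have hv₀σ : v₀ ∈ σ := by
      have : v₀ ∈ σ \ τ := hv₀ ▸ Finset.mem_singleton_self v₀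
      exact (Finset.mem_sdiff.mp this).1
    have hv₀τ : v₀ ∉ τ := by
      have : v₀ ∈ σ \ τ := hv₀ ▸ Finset.mem_singleton_self v₀
      exact (Finset.mem_sdiff.mp this).2
    have herase : σ.erase v₀ = τ := by
      apply Finset.eq_of_subset_of_card_le
      · intro x hx
        rw [Finset.mem_erase] at hx
        by_contra hxτ
        have : x ∈ σ \ τ := Finset.mem_sdiff.mpr ⟨hx.2, hxτ⟩
        rw [hv₀] at this
        exact hx.1 (Finset.mem_singleton.mp this)
      · rw [Finset.card_erase_of_mem hv₀σ]; omega
    rw [Finset.sum_eq_single_of_mem v₀ hv₀σ]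
    · rw [herase, Finsupp.single_apply, if_pos rfl]
    · intro v hvσ hvne
      rw [Finsupp.single_apply, if_neg]
      intro h
      have hvτ : v ∉ τ := h ▸ Finset.notMem_erase v σ
      have : v ∈ σ \ τ := Finset.mem_sdiff.mpr ⟨hvσ, hvτ⟩
      rw [hv₀] at this
      exact hvne (Finset.mem_singleton.mp this)
  · rw [if_neg hsub]
    apply Finset.sum_eq_zero
    intro v hv
    rw [Finsupp.single_apply, if_neg]
    intro h
    exact hsub (h ▸ Finset.erase_subset v σ)

lemma bdry_bdry_single (σ : Finset V) : bdry V (bdry V (Finsupp.single σ 1)) = 0 := by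
  rw [bdry_single]
  by_cases h1 : σ.card ≤ 1
  · rw [if_pos h1, map_zero]
  rw [if_neg h1, map_sum]
  by_cases h2 : σ.card = 2
  · apply Finset.sum_eq_zero
    intro v hv
    rw [bdry_single, if_pos]
    rw [Finset.card_erase_of_mem hv]; omega
  · have h3 : 3 ≤ σ.card := by omega
    have hrw : ∀ v ∈ σ, bdry V (Finsupp.single (σ.erase v) 1)
        = ∑ w ∈ σ.erase v, Finsupp.single ((σ.erase v).erase w) (1 : ZMod 2) := by
      intro v hv
      rw [bdry_single, if_neg]
      rw [Finset.card_erase_of_mem hv]; omega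
    rw [Finset.sum_congr rfl hrw, Finset.sum_sigma' σ (fun v => σ.erase v)
      (fun v w => Finsupp.single ((σ.erase v).erase w) (1 : ZMod 2))]
    refine Finset.sum_involution (fun p _ => ⟨p.2, p.1⟩) ?_ ?_ ?_ ?_
    · intro a ha
      rw [Finset.erase_right_comm]
      exact ch_add_self _
    · intro a ha _
      have h := Finset.mem_sigma.mp ha
      intro heq
      have h2 : a.2 = a.1 := congrArg Sigma.fst heq
      exact (Finset.ne_of_mem_erase h.2) h2
    · intro a ha
      have h := Finset.mem_sigma.mp ha
      exact Finset.mem_sigma.mpr ⟨Finset.mem_of_mem_erase h.2,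
        Finset.mem_erase.mpr ⟨(Finset.ne_of_mem_erase h.2).symm, h.1⟩⟩
    · intro a ha
      rfl

lemma bdry_bdry (f : Ch V) : bdry V (bdry V f) = 0 := by
  have : f = ∑ t ∈ f.support, Finsupp.single t (f t) := (Finsupp.sum_single f).symm
  rw [this, map_sum, map_sum]
  apply Finset.sum_eq_zero
  intro t _
  have : Finsupp.single t (f t) = (f t) • Finsupp.single t (1 : ZMod 2) := by
    rw [Finsupp.smul_single, smul_eq_mul, mul_one]
  rw [this, map_smul, map_smul, bdry_bdry_single, smul_zero]

lemma mem_support_bdry {f : Ch V} {s : Finset V} (hs : s ∈ (bdry V f).support) :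
    ∃ t ∈ f.support, s ⊆ t ∧ s.card + 1 = t.card ∧ 2 ≤ t.card := by
  have hf : f = ∑ t ∈ f.support, Finsupp.single t (f t) := (Finsupp.sum_single f).symm
  rw [hf, map_sum] at hs
  have := Finsupp.support_finset_sum hs
  rw [Finset.mem_biUnion] at this
  obtain ⟨t, ht, hst⟩ := this
  refine ⟨t, ht, ?_⟩
  have h1 : Finsupp.single t (f t) = (f t) • Finsupp.single t (1 : ZMod 2) := by
    rw [Finsupp.smul_single, smul_eq_mul, mul_one]
  rw [h1, map_smul] at hst
  have hst2 := Finsupp.support_smul hst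
  rw [bdry_single] at hst2
  by_cases hc : t.card ≤ 1
  · rw [if_pos hc] at hst2; simp at hst2
  rw [if_neg hc] at hst2
  have := Finsupp.support_finset_sum hst2
  rw [Finset.mem_biUnion] at this
  obtain ⟨v, hv, hsv⟩ := this
  have : s = t.erase v := Finset.mem_singleton.mp (Finsupp.support_single_subset hsv)
  subst this
  refine ⟨Finset.erase_subset v t, ?_, by omega⟩
  rw [Finset.card_erase_of_mem hv]; omega

end Aux

section WF
variable {V : Type*} [Fintype V] [DecidableEq V]

lemma transGen_chain {α : Type*} {r : α → α → Prop} {a b : α} (h : Relation.TransGen r a b) :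
    ∃ n, 1 ≤ n ∧ ∃ g : ℕ → α, g 0 = a ∧ g n = b ∧ ∀ i < n, r (g i) (g (i + 1)) := by
  induction h with
  | @single c hr =>
    refine ⟨1, le_refl 1, fun i => if i = 0 then a else c, by simp, by simp, ?_⟩
    intro i hi
    interval_cases i
    simpa using hr
  | @tail c d hab hr ih =>
    obtain ⟨n, hn, g, hg0, hgn, hstep⟩ := ih
    refine ⟨n + 1, by omega, fun i => if i ≤ n then g i else d, ?_, ?_, ?_⟩
    · simp [hg0]
    · simp
    intro i hi
    by_cases hin : i < n
    · have h1 : i ≤ n := by omega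
      have h2 : i + 1 ≤ n := by omega
      simp only [if_pos h1, if_pos h2]
      exact hstep i hin
    · have hieq : i = n := by omega
      simp only [if_pos (le_of_eq hieq), if_neg (by omega : ¬ i + 1 ≤ n)]
      rw [hieq, hgn]
      exact hr

lemma acyclic_no_transGen_cycle (m : PartialMatching V) (hac : m.Acyclic) (a : Finset V) :
    ¬ Relation.TransGen (fun x y => IsEdge m x y) a a := by
  intro h
  obtain ⟨n₀, hn₀, g₀, hg₀0, hg₀n, hstep₀⟩ := transGen_chain h
  have hQ : ∃ n, 1 ≤ n ∧ ∃ g : ℕ → Finset V, g n = g 0 ∧ ∀ i < n, IsEdge m (g i) (g (i + 1)) :=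
    ⟨n₀, hn₀, g₀, by rw [hg₀0, hg₀n], hstep₀⟩
  classical
  obtain ⟨hN1, g, hgN, hstep⟩ := Nat.find_spec hQ
  set N := Nat.find hQ with hNdef
  -- injectivity of g on [1, N]
  have hinj : ∀ p q, 1 ≤ p → p < q → q ≤ N → g p ≠ g q := by
    intro p q hp hpq hqN heq
    have hlt : q - p < N := by omega
    refine Nat.find_min hQ hlt ⟨by omega, fun i => g (p + i), ?_, ?_⟩
    · show g (p + (q - p)) = g (p + 0)
      have h1 : p + (q - p) = q := by omega
      have h2 : p + 0 = p := by omega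
      rw [h1, h2]; exact heq.symm
    · intro i hi
      show IsEdge m (g (p + i)) (g (p + (i + 1)))
      have h1 : p + (i + 1) = p + i + 1 := by omega
      rw [h1]
      exact hstep (p + i) (by omega)
  -- N ≥ 2
  have hN2 : 2 ≤ N := by
    rcases Nat.lt_or_ge N 2 with h2 | h2
    · exfalso
      have hN1' : N = 1 := by omega
      have := hstep 0 (by omega)
      rw [show (0 : ℕ) + 1 = N by omega, hgN] at this
      exact this.1 rfl
    · exact h2
  -- edge facts: IsEdge m (g i) (g (i+1)) gives facts about g (i+1)
  -- build the cycle for hac: f i := g (N - i)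
  apply hac
  refine ⟨N, fun i => g (N - i), hN2, ?_, ?_, ?_⟩
  · intro i hi j hj heq
    by_contra hne
    rcases Nat.lt_or_ge i j with hij | hij
    · exact hinj (N - j) (N - i) (by omega) (by omega) (by omega) heq.symm
    · have hij' : j < i := by omega
      exact hinj (N - i) (N - j) (by omega) (by omega) (by omega) heq
  · intro i hi
    have hstep' := hstep (N - i - 1) (by omega)
    have h1 : N - i - 1 + 1 = N - i := by omega
    rw [h1] at hstep'
    exact ⟨hstep'.2.1, hstep'.2.2.1⟩
  · intro i hi
    by_cases hi0 : i = N - 1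
    · subst hi0
      have h1 : (N - 1 + 1) % N = 0 := by
        have : N - 1 + 1 = N := by omega
        rw [this, Nat.mod_self]
      rw [h1]
      show Covers (g (N - 0)) (m.μ (g (N - (N - 1))))
      have h2 : N - (N - 1) = 1 := by omega
      have h0 : N - 0 = N := by omega
      rw [h2, h0, hgN]
      exact (hstep 0 (by omega)).2.2.2
    · have h1 : (i + 1) % N = i + 1 := Nat.mod_eq_of_lt (by omega)
      rw [h1]
      have hstep' := hstep (N - i - 1) (by omega)
      have h2 : N - i - 1 + 1 = N - i := by omega
      rw [h2] at hstep'
      show Covers (g (N - (i + 1))) (m.μ (g (N - i)))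
      have h3 : N - (i + 1) = N - i - 1 := by omega
      rw [h3]
      exact hstep'.2.2.2

lemma acyclic_wf (m : PartialMatching V) (hac : m.Acyclic) :
    WellFounded (fun b a => IsEdge m a b) ∧ WellFounded (fun a b => IsEdge m a b) := by
  have hirr : ∀ a : Finset V, ¬ Relation.TransGen (fun x y => IsEdge m x y) a a :=
    acyclic_no_transGen_cycle m hac
  constructor
  · have : IsTrans (Finset V) (Relation.TransGen (fun b a : Finset V => IsEdge m a b)) :=
      ⟨fun _ _ _ h1 h2 => h1.trans h2⟩
    have : IsIrrefl (Finset V) (Relation.TransGen (fun b a : Finset V => IsEdge m a b)) := by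
      constructor
      intro a ha
      exact hirr a (Relation.transGen_swap.mp ha)
    have hwf := Finite.wellFounded_of_trans_of_irrefl
      (Relation.TransGen (fun b a : Finset V => IsEdge m a b))
    exact Subrelation.wf (r := Relation.TransGen (fun b a : Finset V => IsEdge m a b))
      (q := fun b a : Finset V => IsEdge m a b)
      (fun {x y} h => Relation.TransGen.single h) hwf
  · have : IsTrans (Finset V) (Relation.TransGen (fun a b : Finset V => IsEdge m a b)) :=
      ⟨fun _ _ _ h1 h2 => h1.trans h2⟩
    have : IsIrrefl (Finset V) (Relation.TransGen (fun a b : Finset V => IsEdge m a b)) :=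
      ⟨fun a ha => hirr a ha⟩
    have hwf := Finite.wellFounded_of_trans_of_irrefl
      (Relation.TransGen (fun a b : Finset V => IsEdge m a b))
    exact Subrelation.wf (r := Relation.TransGen (fun a b : Finset V => IsEdge m a b))
      (q := fun a b : Finset V => IsEdge m a b)
      (fun {x y} h => Relation.TransGen.single h) hwf

end WF

section Phi
open scoped Classical
variable {V : Type*} [Fintype V] [DecidableEq V]
variable {K : Set (Finset V)} {m : PartialMatching V} {φ : Finset V → Ch V}

lemma edge_facts {α β : Finset V} (hMK : m.M ⊆ K) (h : IsEdge m α β) :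
    β ∈ Mup m ∧ β ∈ K ∧ β.card = α.card := by
  obtain ⟨hne, hM, hcov, hcov'⟩ := h
  refine ⟨⟨hM, hcov⟩, hMK hM, ?_⟩
  have h1 := hcov.2
  have h2 := hcov'.2
  omega

lemma phi_eval (hφ : IsClosure K m φ) {γ : Finset V} (hγK : γ ∈ K) (τ : Finset V) :
    (φ γ) τ = (Finsupp.single γ (1 : ZMod 2)) τ
      + ∑ b : Finset V, if IsEdge m γ b then (φ b) τ else 0 := by
  rw [hφ γ hγK, Finsupp.add_apply, Finsupp.finset_sum_apply]
  congr 1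
  apply Finset.sum_congr rfl
  intro b _
  by_cases he : IsEdge m γ b
  · rw [if_pos he, if_pos he]
  · rw [if_neg he, if_neg he]
    rfl

lemma bdry_phi_eval (hφ : IsClosure K m φ) {γ : Finset V} (hγK : γ ∈ K) (τ : Finset V) :
    (bdry V (φ γ)) τ = (bdry V (Finsupp.single γ 1)) τ
      + ∑ b : Finset V, if IsEdge m γ b then (bdry V (φ b)) τ else 0 := by
  rw [hφ γ hγK, map_add, map_sum, Finsupp.add_apply, Finsupp.finset_sum_apply]
  congr 1
  apply Finset.sum_congr rfl
  intro b _
  by_cases he : IsEdge m γ b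
  · rw [if_pos he, if_pos he]
  · rw [if_neg he, if_neg he, map_zero]
    rfl

lemma support_phi_up (hMK : m.M ⊆ K) (hac : m.Acyclic) (hφ : IsClosure K m φ) :
    ∀ β, β ∈ Mup m → β ∈ K → ∀ s ∈ (φ β).support, s ∈ Mup m ∧ s.card = β.card := by
  have hwf := (acyclic_wf m hac).1
  intro β
  induction β using hwf.induction with
  | _ β ih =>
  intro hβup hβK s hs
  rw [hφ β hβK] at hs
  have hs2 := Finsupp.support_add hs
  rw [Finset.mem_union] at hs2
  rcases hs2 with hs2 | hs2
  · have : s = β := Finset.mem_singleton.mp (Finsupp.support_single_subset hs2)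
    subst this
    exact ⟨hβup, rfl⟩
  · have := Finsupp.support_finset_sum hs2
    rw [Finset.mem_biUnion] at this
    obtain ⟨b, _, hsb⟩ := this
    by_cases he : IsEdge m β b
    · rw [if_pos he] at hsb
      obtain ⟨hbup, hbK, hbc⟩ := edge_facts hMK he
      have := ih b he hbup hbK s hsb
      exact ⟨this.1, hbc ▸ this.2⟩
    · rw [if_neg he] at hsb
      simp at hsb

lemma support_phi (hMK : m.M ⊆ K) (hac : m.Acyclic) (hφ : IsClosure K m φ)
    {γ : Finset V} (hγK : γ ∈ K) :
    ∀ s ∈ (φ γ).support, (s = γ ∨ s ∈ Mup m) ∧ s.card = γ.card := by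
  intro s hs
  rw [hφ γ hγK] at hs
  have hs2 := Finsupp.support_add hs
  rw [Finset.mem_union] at hs2
  rcases hs2 with hs2 | hs2
  · have : s = γ := Finset.mem_singleton.mp (Finsupp.support_single_subset hs2)
    subst this
    exact ⟨Or.inl rfl, rfl⟩
  · have := Finsupp.support_finset_sum hs2
    rw [Finset.mem_biUnion] at this
    obtain ⟨b, _, hsb⟩ := this
    by_cases he : IsEdge m γ b
    · rw [if_pos he] at hsb
      obtain ⟨hbup, hbK, hbc⟩ := edge_facts hMK he
      have := support_phi_up hMK hac hφ b hbup hbK s hsb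
      exact ⟨Or.inr this.1, hbc ▸ this.2⟩
    · rw [if_neg he] at hsb
      simp at hsb

lemma bdry_phi_up (hK : IsComplex K) (hMK : m.M ⊆ K) (hac : m.Acyclic)
    (hφ : IsClosure K m φ) :
    ∀ β, β ∈ Mup m → β ∈ K → ∀ σ, σ ∈ Mup m → σ.card = β.card →
      (bdry V (φ β)) (m.μ σ) = if β = σ then 1 else 0 := by
  have hwf := (acyclic_wf m hac).1
  intro β
  induction β using hwf.induction with
  | _ β ih =>
  intro hβup hβK σ hσup hσc
  have hσM : σ ∈ m.M := hσup.1
  have hμσK : m.μ σ ∈ K := hMK (m.mem_M σ hσM)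
  have hμσne : (m.μ σ).Nonempty := (hK _ hμσK).1
  have hμσc : (m.μ σ).card + 1 = β.card := by
    have := hσup.2.2
    omega
  rw [bdry_phi_eval hφ hβK, bdry_single_apply hμσne hμσc]
  have hsum : (∑ b : Finset V, if IsEdge m β b then (bdry V (φ b)) (m.μ σ) else 0)
      = if IsEdge m β σ then 1 else 0 := by
    rw [Finset.sum_eq_single σ]
    · by_cases he : IsEdge m β σ
      · rw [if_pos he, if_pos he]
        obtain ⟨hbup, hbK, hbc⟩ := edge_facts hMK he
        rw [ih σ he hbup hbK σ hσup (by omega), if_pos rfl]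
      · rw [if_neg he, if_neg he]
    · intro b _ hbne
      by_cases he : IsEdge m β b
      · rw [if_pos he]
        obtain ⟨hbup, hbK, hbc⟩ := edge_facts hMK he
        rw [ih b he hbup hbK σ hσup (by omega), if_neg hbne]
      · rw [if_neg he]
    · intro h
      exact absurd (Finset.mem_univ σ) h
  rw [hsum]
  by_cases hbs : β = σ
  · subst hbs
    have hsub : m.μ β ⊆ β := hβup.2.1
    rw [if_pos hsub, if_pos rfl, if_neg (fun h : IsEdge m β β => h.1 rfl)]
    rfl
  · rw [if_neg hbs]
    by_cases hsub : m.μ σ ⊆ β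
    · have he : IsEdge m β σ :=
        ⟨fun h => hbs h.symm, hσM, hσup.2, ⟨hsub, by omega⟩⟩
      rw [if_pos hsub, if_pos he]
      decide
    · have he : ¬ IsEdge m β σ := fun h => hsub h.2.2.2.1
      rw [if_neg hsub, if_neg he]
      rfl

lemma bdry_phi_crit (hK : IsComplex K) (hMK : m.M ⊆ K) (hac : m.Acyclic)
    (hφ : IsClosure K m φ) {γ : Finset V} (hγK : γ ∈ K) (hγM : γ ∉ m.M)
    {σ : Finset V} (hσup : σ ∈ Mup m) (hσc : σ.card = γ.card) :
    (bdry V (φ γ)) (m.μ σ) = 0 := by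
  have hσM : σ ∈ m.M := hσup.1
  have hμσK : m.μ σ ∈ K := hMK (m.mem_M σ hσM)
  have hμσne : (m.μ σ).Nonempty := (hK _ hμσK).1
  have hμσc : (m.μ σ).card + 1 = γ.card := by
    have := hσup.2.2
    omega
  rw [bdry_phi_eval hφ hγK, bdry_single_apply hμσne hμσc]
  have hsum : (∑ b : Finset V, if IsEdge m γ b then (bdry V (φ b)) (m.μ σ) else 0)
      = if IsEdge m γ σ then 1 else 0 := by
    rw [Finset.sum_eq_single σ]
    · by_cases he : IsEdge m γ σ
      · rw [if_pos he, if_pos he]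
        obtain ⟨hbup, hbK, hbc⟩ := edge_facts hMK he
        rw [bdry_phi_up hK hMK hac hφ σ hbup hbK σ hσup (by omega), if_pos rfl]
      · rw [if_neg he, if_neg he]
    · intro b _ hbne
      by_cases he : IsEdge m γ b
      · rw [if_pos he]
        obtain ⟨hbup, hbK, hbc⟩ := edge_facts hMK he
        rw [bdry_phi_up hK hMK hac hφ b hbup hbK σ hσup (by omega), if_neg hbne]
      · rw [if_neg he]
    · intro h
      exact absurd (Finset.mem_univ σ) h
  rw [hsum]
  by_cases hsub : m.μ σ ⊆ γ
  · have he : IsEdge m γ σ :=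
      ⟨fun h => hγM (h ▸ hσM), hσM, hσup.2, ⟨hsub, by omega⟩⟩
    rw [if_pos hsub, if_pos he]
    decide
  · have he : ¬ IsEdge m γ σ := fun h => hsub h.2.2.2.1
    rw [if_neg hsub, if_neg he]
    rfl

end Phi

/-- For a finite simplicial complex `K` with an acyclic partial matching
`μ`, and any critical `q`-simplex `α ∈ R_q(μ)`, there is a set `S(α) ⊆ R_{q-1}(μ)` with
`∂(φ_q α) = ∑_{β ∈ S(α)} φ_{q-1} β`. -/
theorem bdry_closure_eq_sum {V : Type*} [Fintype V] [DecidableEq V]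
    (K : Set (Finset V)) (hK : IsComplex K)
    (m : PartialMatching V) (hMK : m.M ⊆ K) (hac : m.Acyclic)
    (φ : Finset V → Ch V) (hφ : IsClosure K m φ)
    (q : ℕ) (α : Finset V) (hα : α ∈ Rcard K m (q + 1)) :
    ∃ S : Finset (Finset V), ↑S ⊆ Rcard K m q ∧
      bdry V (φ α) = ∑ β ∈ S, φ β := by
  classical
  obtain ⟨hαK, hαcard, hαM⟩ := hα
  set c := bdry V (φ α) with hc
  -- support facts for c
  have hsuppc : ∀ s ∈ c.support, s ∈ K ∧ s.card = q ∧ (s ∉ m.M ∨ s ∈ Mup m) := by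
    intro s hs
    obtain ⟨t, ht, hst, hcard, h2⟩ := mem_support_bdry hs
    have htK : t ∈ K ∧ t.card = q + 1 := by
      have hsp := support_phi hMK hac hφ hαK t ht
      rcases hsp.1 with h | h
      · subst h; exact ⟨hαK, hαcard⟩
      · exact ⟨hMK h.1, by rw [hsp.2, hαcard]⟩
    have hsK : s ∈ K := by
      have hne : s.Nonempty := Finset.card_pos.mp (by omega)
      exact (hK t htK.1).2 s hst hne
    have hscard : s.card = q := by omega
    refine ⟨hsK, hscard, ?_⟩
    by_cases hsM : s ∈ m.M
    · right
      rcases m.matched s hsM with hdown | hup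
      · exfalso
        have hμμ : m.μ (m.μ s) = s := m.invol s hsM
        have hcov : Covers (m.μ s) (m.μ (m.μ s)) := by rw [hμμ]; exact hdown
        have hμup : m.μ s ∈ Mup m := ⟨m.mem_M s hsM, hcov⟩
        have hμc : (m.μ s).card = α.card := by
          have := hdown.2; rw [hαcard]; omega
        have := bdry_phi_crit hK hMK hac hφ hαK hαM hμup hμc
        rw [hμμ] at this
        exact (Finsupp.mem_support_iff.mp hs) this
      · exact ⟨hsM, hup⟩
    · exact Or.inl hsM
  refine ⟨c.support.filter (fun s => s ∉ m.M), ?_, ?_⟩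
  · intro s hsmem
    rw [Finset.coe_filter, Set.mem_setOf_eq] at hsmem
    obtain ⟨hs, hsM⟩ := hsmem
    obtain ⟨h1, h2, _⟩ := hsuppc s hs
    exact ⟨h1, h2, hsM⟩
  set S := c.support.filter (fun s => s ∉ m.M) with hS
  have hSfacts : ∀ β ∈ S, β ∈ K ∧ β.card = q ∧ β ∉ m.M := by
    intro β hβ
    rw [hS, Finset.mem_filter] at hβ
    obtain ⟨h1, h2, _⟩ := hsuppc β hβ.1
    exact ⟨h1, h2, hβ.2⟩
  set d := c + ∑ β ∈ S, φ β with hd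
  -- it suffices to show d = 0
  suffices hd0 : d = 0 by
    have h1 : d + ∑ β ∈ S, φ β = ∑ β ∈ S, φ β := by rw [hd0, zero_add]
    rw [hd, add_assoc, ch_add_self, add_zero] at h1
    exact h1
  by_contra hdne
  -- elements of the support of d are in Mup with card q
  have hsuppd : ∀ s ∈ d.support, s ∈ Mup m ∧ s.card = q := by
    intro s hs
    have hdsne : d s ≠ 0 := Finsupp.mem_support_iff.mp hs
    by_contra hnot
    -- first : s ∈ Mup m → s.card = q
    have hcard_of : s ∈ (∑ β ∈ S, φ β).support → s.card = q := by
      intro hmem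
      have := Finsupp.support_finset_sum hmem
      rw [Finset.mem_biUnion] at this
      obtain ⟨β, hβS, hsβ⟩ := this
      obtain ⟨hβK, hβc, hβM⟩ := hSfacts β hβS
      have := (support_phi hMK hac hφ hβK s hsβ).2
      omega
    have hsupp_un := Finsupp.support_add (hd ▸ hs)
    rw [Finset.mem_union] at hsupp_un
    have hscard : s.card = q := by
      rcases hsupp_un with h | h
      · exact (hsuppc s h).2.1
      · exact hcard_of h
    have hsMup : s ∉ Mup m := fun h => hnot ⟨h, hscard⟩
    -- φ β evaluated at s, for β ∈ S
    have hφval : ∀ β ∈ S, (φ β) s = if s = β then 1 else 0 := by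
      intro β hβS
      obtain ⟨hβK, hβc, hβM⟩ := hSfacts β hβS
      by_cases hsβ : s = β
      · subst hsβ
        rw [if_pos rfl, phi_eval hφ hβK, Finsupp.single_apply, if_pos rfl]
        have hzero : (∑ b : Finset V, if IsEdge m s b then (φ b) s else 0) = 0 := by
          apply Finset.sum_eq_zero
          intro b _
          by_cases he : IsEdge m s b
          · rw [if_pos he]
            obtain ⟨hbup, hbK, hbc⟩ := edge_facts hMK he
            by_contra hne
            exact hsMup (support_phi_up hMK hac hφ b hbup hbK s
              (Finsupp.mem_support_iff.mpr hne)).1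
          · rw [if_neg he]
        rw [hzero, add_zero]
      · rw [if_neg hsβ]
        by_contra hne
        have := support_phi hMK hac hφ hβK s (Finsupp.mem_support_iff.mpr hne)
        rcases this.1 with h | h
        · exact hsβ h
        · exact hsMup h
    have hdval : d s = c s + if s ∈ S then 1 else 0 := by
      rw [hd, Finsupp.add_apply, Finsupp.finset_sum_apply]
      congr 1
      rw [Finset.sum_congr rfl hφval, Finset.sum_ite_eq S s (fun _ => (1 : ZMod 2))]
    by_cases hsS : s ∈ S
    · have hcs : c s = 1 := by
        have : c s ≠ 0 := Finsupp.mem_support_iff.mp (Finset.mem_filter.mp hsS).1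
        revert this; generalize c s = x; revert x; decide
      rw [hdval, hcs, if_pos hsS] at hdsne
      exact hdsne (by decide)
    · have hcs : c s = 0 := by
        by_contra hne
        have hmem : s ∈ c.support := Finsupp.mem_support_iff.mpr hne
        obtain ⟨_, _, h3⟩ := hsuppc s hmem
        rcases h3 with h | h
        · exact hsS (Finset.mem_filter.mpr ⟨hmem, h⟩)
        · exact hsMup h
      rw [hdval, hcs, if_neg hsS, zero_add] at hdsne
      exact hdsne rfl
  -- pick a minimal element of the support of d
  have hwf2 := (acyclic_wf m hac).2
  have hTne : (↑d.support : Set (Finset V)).Nonempty := by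
    rw [Finset.coe_nonempty, Finsupp.support_nonempty_iff]
    exact hdne
  obtain ⟨σ₀, hσ₀T, hσ₀min⟩ := hwf2.has_min (↑d.support) hTne
  rw [Finset.mem_coe] at hσ₀T
  obtain ⟨hσ₀up, hσ₀c⟩ := hsuppd σ₀ hσ₀T
  have hσ₀M : σ₀ ∈ m.M := hσ₀up.1
  have hμσ₀K : m.μ σ₀ ∈ K := hMK (m.mem_M σ₀ hσ₀M)
  have hμσ₀ne : (m.μ σ₀).Nonempty := (hK _ hμσ₀K).1
  have hμσ₀c : (m.μ σ₀).card + 1 = q := by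
    have := hσ₀up.2.2; omega
  -- evaluate (bdry V d) (m.μ σ₀) in two ways
  have hway1 : (bdry V d) (m.μ σ₀) = 0 := by
    rw [hd, map_add, hc, bdry_bdry, zero_add, map_sum, Finsupp.finset_sum_apply]
    apply Finset.sum_eq_zero
    intro β hβS
    obtain ⟨hβK, hβc, hβM⟩ := hSfacts β hβS
    exact bdry_phi_crit hK hMK hac hφ hβK hβM hσ₀up (by omega)
  have hway2 : (bdry V d) (m.μ σ₀) = 1 := by
    have hdsum : d = ∑ s ∈ d.support, Finsupp.single s (1 : ZMod 2) := by
      conv_lhs => rw [← Finsupp.sum_single d]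
      rw [Finsupp.sum]
      apply Finset.sum_congr rfl
      intro s hs
      have : d s = 1 := by
        have := Finsupp.mem_support_iff.mp hs
        revert this; generalize d s = x; revert x; decide
      rw [this]
    rw [hdsum, map_sum, Finsupp.finset_sum_apply]
    rw [Finset.sum_eq_single σ₀]
    · rw [bdry_single_apply hμσ₀ne (by omega : (m.μ σ₀).card + 1 = σ₀.card),
        if_pos hσ₀up.2.1]
    · intro s hsT hsne
      obtain ⟨hsup, hsc⟩ := hsuppd s hsT
      rw [bdry_single_apply hμσ₀ne (by omega : (m.μ σ₀).card + 1 = s.card)]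
      rw [if_neg]
      intro hsub
      have hedge : IsEdge m s σ₀ :=
        ⟨fun h => hsne h.symm, hσ₀M, hσ₀up.2, ⟨hsub, by omega⟩⟩
      exact hσ₀min s (Finset.mem_coe.mpr hsT) hedge
    · intro h
      exact absurd hσ₀T h
  rw [hway1] at hway2
  exact absurd hway2.symm (by decide)
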